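/- Let k, r, a, b, m, n be integers with k ≥ 1, 0 ≤ a ≤ m, max{0, ka − r} < b ≤ n, and n > km − r. Then the number of monotone lattice paths from (a,b) to (m,n) staying strictly above y = kx − r equals the sum over i from 0 to ⌊(b+r−1−ka)/(k+1)⌋ of (−1)^i · ((n+r−km)/(m+n+r−(k+1)(a+i))) · C(m+n+r−(k+1)(a+i), m−a−i) · C(b+r−1−k(a+i), i). -/

import Mathlib

open Finset

/-- A monotone lattice path from `s` to `t` using unit steps `(1,0)` and `(0,1)`. -/
def MonoPath (s t : ℤ × ℤ) (P : List (ℤ × ℤ)) : Prop :=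
  P.head? = some s ∧ P.getLast? = some t ∧
  P.Chain' (fun p q => q = (p.1 + 1, p.2) ∨ q = (p.1, p.2 + 1))

/-- Integer binomial coefficient, `0` for negative lower index. -/
def IC (x j : ℤ) : ℕ := if j < 0 then 0 else x.toNat.choose j.toNat

/-- Number of monotone lattice paths from `(a,b)` to `(m,n)` staying weakly above `y = kx - r`. -/
noncomputable def NW (k r a b m n : ℤ) : ℕ :=
  Set.ncard {P : List (ℤ × ℤ) | MonoPath (a, b) (m, n) P ∧ ∀ p ∈ P, k * p.1 - r ≤ p.2}

/-- Number of monotone lattice paths from `(a,b)` to `(m,n)` staying strictly above `y = kx - r`. -/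
noncomputable def NS (k r a b m n : ℤ) : ℕ :=
  Set.ncard {P : List (ℤ × ℤ) | MonoPath (a, b) (m, n) P ∧ ∀ p ∈ P, k * p.1 - r < p.2}

/-!
With `s = n + r - km` and `c = m - a - i` one has `m + n + r - (k+1)(a+i) = (k+1)c + s`, so the
`i`-th summand is `(-1)^i B(s, c) C(b + r - 1 - k(a+i), i)` with the ballot-type number
`B(s, c) = s/((k+1)c+s) C((k+1)c+s, c)`.

As functions of the endpoint `(m, n)`, both sides satisfy Pascal's recursion
`f(m, n) = f(m-1, n) + f(m, n-1)` strictly above the line and away from `(a, b)`: the path count by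
removing the last step, the sum termwise because `B(s, c) = B(s+k, c-1) + B(s-1, c)`. Both are `1`
at `(a, b)`, and both vanish on the line, in column `a - 1` and in row `b - 1`. In row `b - 1`,
with `N = m - a`, the `i`-th summand is `s/N! C(N, i) p(i)` for a polynomial `p` of degree `N - 1`
that vanishes between the upper summation limit and `N`; so the sum is, up to sign, an `N`-th
finite difference of `p`, which is `0`.
-/

open scoped Nat

def LatticeStep (p q : ℤ × ℤ) : Prop := q = (p.1 + 1, p.2) ∨ q = (p.1, p.2 + 1)

theorem latticeStep_iff {p q : ℤ × ℤ} :
    LatticeStep p q ↔ p = (q.1 - 1, q.2) ∨ p = (q.1, q.2 - 1) := by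
  simp only [LatticeStep, Prod.ext_iff]
  omega

theorem monoPath_iff {s t : ℤ × ℤ} {P : List (ℤ × ℤ)} :
    MonoPath s t P ↔ P.head? = some s ∧ P.getLast? = some t ∧ P.IsChain LatticeStep :=
  Iff.rfl

namespace MonoPath

variable {s t : ℤ × ℤ} {P : List (ℤ × ℤ)}

theorem ne_nil (h : MonoPath s t P) : P ≠ [] := by
  rintro rfl
  cases h.1

theorem pairwise_lt (h : MonoPath s t P) : P.Pairwise (· < ·) :=
  List.isChain_iff_pairwise.mp <| (monoPath_iff.mp h).2.2.imp fun p q hpq => by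
    rcases hpq with rfl | rfl <;> simp [Prod.lt_iff]

theorem mem_Icc (h : MonoPath s t P) {p : ℤ × ℤ} (hp : p ∈ P) : p ∈ Set.Icc s t := by
  have hlt := h.pairwise_lt
  constructor
  · obtain ⟨P', rfl⟩ := List.head?_eq_some_iff.mp h.1
    rcases List.mem_cons.mp hp with rfl | hp
    · rfl
    · exact ((List.pairwise_cons.mp hlt).1 p hp).le
  · obtain ⟨Q, rfl⟩ := List.getLast?_eq_some_iff.mp h.2.1
    rcases List.mem_append.mp hp with hp | hp
    · exact ((List.pairwise_append.mp hlt).2.2 p hp t (by simp)).le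
    · rw [List.mem_singleton.mp hp]

theorem le (h : MonoPath s t P) : s ≤ t :=
  (h.mem_Icc (List.mem_of_getLast? h.2.1)).1

end MonoPath

theorem monoPath_concat_iff {s t : ℤ × ℤ} {Q : List (ℤ × ℤ)} (hQ : Q ≠ []) :
    MonoPath s t (Q ++ [t]) ↔ MonoPath s (t.1 - 1, t.2) Q ∨ MonoPath s (t.1, t.2 - 1) Q := by
  obtain ⟨u, hu⟩ := Option.ne_none_iff_exists'.mp (mt List.getLast?_eq_none_iff.mp hQ)
  simp only [monoPath_iff, List.head?_append_of_ne_nil _ hQ, List.getLast?_concat,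
    List.isChain_append, hu, Option.mem_some_iff, forall_eq', List.head?_cons,
    latticeStep_iff, List.isChain_singleton, Option.some.injEq]
  tauto

theorem monoPath_self_iff {s : ℤ × ℤ} {P : List (ℤ × ℤ)} :
    MonoPath s s P ↔ P = [s] := by
  refine ⟨fun h => ?_, fun h => h ▸ ⟨rfl, rfl, List.isChain_singleton _⟩⟩
  obtain ⟨Q, rfl⟩ := List.getLast?_eq_some_iff.mp h.2.1
  rcases eq_or_ne Q [] with rfl | hQ
  · rfl
  · rcases (monoPath_concat_iff hQ).mp h with h' | h' <;>
      simpa [Prod.le_def] using h'.le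

def strictPaths (k r : ℤ) (s t : ℤ × ℤ) : Set (List (ℤ × ℤ)) :=
  {P | MonoPath s t P ∧ ∀ p ∈ P, k * p.1 - r < p.2}

section strictPaths

variable {k r : ℤ} {s t : ℤ × ℤ}

theorem strictPaths_finite : (strictPaths k r s t).Finite := by
  classical
  refine Set.Finite.of_finite_image (f := List.toFinset)
    ((Finset.Icc s t).powerset.finite_toSet.subset ?_) ?_
  · rintro _ ⟨P, hP, rfl⟩
    simp only [Finset.coe_powerset, Set.mem_preimage, Set.mem_powerset_iff, Finset.coe_subset]
    intro p hp
    simpa using hP.1.mem_Icc (List.mem_toFinset.mp hp)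
  · intro P hP Q hQ hPQ
    exact hP.1.pairwise_lt.eq_of_mem_iff hQ.1.pairwise_lt fun p => by
      rw [← List.mem_toFinset, hPQ, List.mem_toFinset]

theorem strictPaths_self (h : k * s.1 - r < s.2) : strictPaths k r s s = {[s]} := by
  ext P
  simp only [strictPaths, monoPath_self_iff, Set.mem_ofPred_eq, Set.mem_singleton_iff,
    and_iff_left_iff_imp]
  rintro rfl p hp
  rwa [List.mem_singleton.mp hp]

theorem strictPaths_eq_empty_of_not_le (h : ¬s ≤ t) : strictPaths k r s t = ∅ :=
  Set.eq_empty_of_forall_notMem fun _ hP => h hP.1.le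

theorem strictPaths_eq_empty_of_le_line (h : t.2 ≤ k * t.1 - r) : strictPaths k r s t = ∅ :=
  Set.eq_empty_of_forall_notMem fun _ hP =>
    (hP.2 t (List.mem_of_getLast? hP.1.2.1)).not_ge h

theorem strictPaths_eq_image (hst : s ≠ t) (ht : k * t.1 - r < t.2) :
    strictPaths k r s t =
      (· ++ [t]) '' (strictPaths k r s (t.1 - 1, t.2) ∪ strictPaths k r s (t.1, t.2 - 1)) := by
  ext P
  simp only [strictPaths, Set.mem_image, Set.mem_union, Set.mem_ofPred_eq]
  constructor
  · rintro ⟨hP, habove⟩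
    obtain ⟨Q, rfl⟩ := List.getLast?_eq_some_iff.mp hP.2.1
    have hQ : Q ≠ [] := by
      rintro rfl
      exact hst (Option.some.inj hP.1).symm
    have hQabove : ∀ p ∈ Q, k * p.1 - r < p.2 := fun p hp => habove p (by simp [hp])
    rcases (monoPath_concat_iff hQ).mp hP with h | h
    exacts [⟨Q, Or.inl ⟨h, hQabove⟩, rfl⟩, ⟨Q, Or.inr ⟨h, hQabove⟩, rfl⟩]
  · rintro ⟨Q, hQ, rfl⟩
    have hQ' : (MonoPath s (t.1 - 1, t.2) Q ∨ MonoPath s (t.1, t.2 - 1) Q) ∧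
        ∀ p ∈ Q, k * p.1 - r < p.2 := by tauto
    have hne : Q ≠ [] := by rcases hQ'.1 with h | h <;> exact h.ne_nil
    refine ⟨(monoPath_concat_iff hne).mpr hQ'.1, fun p hp => ?_⟩
    rcases List.mem_append.mp hp with hp | hp
    · exact hQ'.2 p hp
    · rwa [List.mem_singleton.mp hp]

theorem ncard_strictPaths_eq_add (hst : s ≠ t) (ht : k * t.1 - r < t.2) :
    (strictPaths k r s t).ncard =
      (strictPaths k r s (t.1 - 1, t.2)).ncard + (strictPaths k r s (t.1, t.2 - 1)).ncard := by
  have hdisj : Disjoint (strictPaths k r s (t.1 - 1, t.2)) (strictPaths k r s (t.1, t.2 - 1)) :=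
    Set.disjoint_left.mpr fun P hP hP' => by
      have := hP.1.2.1.symm.trans hP'.1.2.1
      simp at this
  rw [strictPaths_eq_image hst ht, Set.ncard_image_of_injective _ (List.append_left_injective _),
    Set.ncard_union_eq hdisj strictPaths_finite strictPaths_finite]

end strictPaths

theorem IC_of_neg {x j : ℤ} (h : j < 0) : IC x j = 0 := if_pos h

theorem IC_natCast (n j : ℕ) : IC n j = n.choose j := by simp [IC]

def ballotNumber (k s c : ℤ) : ℚ := s / ((k + 1) * c + s : ℤ) * IC ((k + 1) * c + s) c

section ballotNumber

variable {k s c : ℤ}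

theorem ballotNumber_of_neg (hc : c < 0) : ballotNumber k s c = 0 := by
  simp [ballotNumber, IC_of_neg hc]

theorem ballotNumber_zero_left : ballotNumber k 0 c = 0 := by
  simp [ballotNumber]

theorem ballotNumber_zero_right (hs : s ≠ 0) : ballotNumber k s 0 = 1 := by
  simp [ballotNumber, IC, hs]

theorem ballotNumber_natCast {c M : ℕ} (h : (k + 1) * c + s = M) :
    ballotNumber k s c = s / M * M.choose c := by
  rw [ballotNumber, h, IC_natCast, Int.cast_natCast]

theorem ballotNumber_eq_add (hk : 0 ≤ k) (hs : 1 ≤ s) (hcs : c ≠ 0 ∨ s ≠ 1) :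
    ballotNumber k s c = ballotNumber k (s + k) (c - 1) + ballotNumber k (s - 1) c := by
  rcases lt_trichotomy c 0 with hc | rfl | hc
  · simp [ballotNumber_of_neg hc, ballotNumber_of_neg (show c - 1 < 0 by omega)]
  · rw [ballotNumber_zero_right (by omega), ballotNumber_of_neg (by norm_num),
      ballotNumber_zero_right (by omega)]
    simp
  obtain ⟨j, rfl⟩ : ∃ j : ℕ, c = (j + 1 : ℕ) := ⟨(c - 1).toNat, by omega⟩
  push_cast at hc
  obtain ⟨p, hp⟩ : ∃ p : ℕ, (k + 1) * (j + 1) + s = p + 1 :=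
    ⟨((k + 1) * (j + 1) + s - 1).toNat, by
      have := mul_nonneg (by omega : 0 ≤ k + 1) hc.le; omega⟩
  have hjp : j ≤ p := by nlinarith
  rw [ballotNumber_natCast (c := j + 1) (M := p + 1) (by push_cast; omega),
    show ((j + 1 : ℕ) : ℤ) - 1 = j by push_cast; ring,
    ballotNumber_natCast (c := j) (M := p) (by linarith),
    ballotNumber_natCast (c := j + 1) (M := p) (by push_cast; linarith),
    Nat.choose_succ_succ']
  -- with Pascal's rule, the absorption identity `(j+1) C(p, j+1) = (p-j) C(p, j)` is all we need
  have habs := congrArg (Nat.cast : ℕ → ℚ) (Nat.choose_succ_right_eq p j)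
  have hpq : (p : ℚ) + 1 = (k + 1) * (j + 1) + s := by exact_mod_cast hp.symm
  push_cast [Nat.cast_sub hjp] at habs ⊢
  have hp0 : (p : ℚ) ≠ 0 := by
    have : 0 < p := by nlinarith
    positivity
  field_simp
  linear_combination (k + 1) * habs + (p.choose j + p.choose (j + 1) : ℚ) * hpq

theorem ballotNumber_mul_IC {k s : ℤ} {c E i : ℕ} (hiE : i ≤ E) (hci : 0 < c + i)
    (h : (k + 1) * c + s = (c + E : ℕ)) :
    ballotNumber k s c * IC E i =
      s / (c + i)! * ((c + i).choose i * (c + E - 1).descFactorial (c + i - 1)) := by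
  rw [ballotNumber_natCast h, IC_natCast]
  have hchoose : (c + E).choose c * E.choose i = (c + E).choose (c + i) * (c + i).choose i := by
    rw [← Nat.choose_symm_add, Nat.choose_mul (Nat.le_add_right c i), Nat.add_sub_cancel_left,
      Nat.add_sub_cancel_left]
  have hdesc :
      (c + i)! * (c + E).choose (c + i) = (c + E) * (c + E - 1).descFactorial (c + i - 1) := by
    rw [← Nat.descFactorial_eq_factorial_mul_choose]
    obtain ⟨N, hN⟩ := Nat.exists_eq_succ_of_ne_zero hci.ne'
    rw [hN, show c + E = (c + E - 1) + 1 by omega, Nat.succ_descFactorial_succ]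
    simp
  have hdescq : ((c + i)! : ℚ) * (c + E).choose (c + i) =
      (c + E : ℕ) * (c + E - 1).descFactorial (c + i - 1) := by exact_mod_cast hdesc
  rw [mul_assoc, ← Nat.cast_mul, hchoose, Nat.cast_mul]
  have hM : ((c + E : ℕ) : ℚ) ≠ 0 := by
    have : 0 < c + E := by omega
    positivity
  have hfac : ((c + i)! : ℚ) ≠ 0 := by positivity
  field_simp
  linear_combination ((c + i).choose i : ℚ) * (s : ℚ) * hdescq

theorem Polynomial.sum_range_neg_one_pow_mul_choose_mul_eval_eq_zero {R : Type*} [CommRing R]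
    (p : Polynomial R) {N : ℕ} (hp : p.natDegree < N) :
    ∑ i ∈ range (N + 1), (-1) ^ i * (N.choose i : R) * p.eval (i : R) = 0 := by
  have hdiff := congr_fun (Polynomial.fwdDiff_iter_eq_zero_of_degree_lt hp) 0
  rw [fwdDiff_iter_eq_sum_shift] at hdiff
  calc ∑ i ∈ range (N + 1), (-1) ^ i * (N.choose i : R) * p.eval (i : R)
      = (-1) ^ N * ∑ i ∈ range (N + 1),
          ((-1 : ℤ) ^ (N - i) * N.choose i) • p.eval (0 + i • (1 : R)) := by
        rw [mul_sum]
        refine sum_congr rfl fun i hi => ?_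
        have hsign : (-1 : R) ^ N * (-1) ^ (N - i) = (-1) ^ i := by
          rw [← pow_add, show N + (N - i) = 2 * (N - i) + i by grind, pow_add, pow_mul]
          simp
        simp only [zsmul_eq_mul, nsmul_eq_mul, zero_add, mul_one]
        push_cast
        linear_combination (N.choose i * p.eval (i : R)) * hsign.symm
    _ = 0 := by rw [hdiff, Pi.zero_apply, mul_zero]

open Polynomial in
noncomputable def ballotPoly (k s : ℤ) (N : ℕ) : ℤ[X] :=
  (descPochhammer ℤ (N - 1)).comp (C ((k + 1) * N + s - 1) - C (k + 1) * X)

section ballotPoly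

open Polynomial

variable {k s : ℤ} {N : ℕ}

theorem eval_ballotPoly (i : ℤ) :
    (ballotPoly k s N).eval i = (descPochhammer ℤ (N - 1)).eval ((k + 1) * (N - i) + s - 1) := by
  simp only [ballotPoly, eval_comp, eval_sub, eval_mul, eval_C, eval_X]
  ring_nf

theorem natDegree_ballotPoly_lt (hN : 0 < N) : (ballotPoly k s N).natDegree < N :=
  calc (ballotPoly k s N).natDegree ≤ (N - 1) * 1 := natDegree_comp_le.trans
        (Nat.mul_le_mul (descPochhammer_natDegree ℤ _).le (by compute_degree))
    _ < N := by omega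

theorem eval_ballotPoly_eq_zero (hk : 0 ≤ k) (hs : 1 ≤ s) {i : ℕ} (hiN : i ≤ N)
    (h : (k + 1) * (N - i) + s < N) : (ballotPoly k s N).eval (i : ℤ) = 0 := by
  obtain ⟨x, hx⟩ : ∃ x : ℕ, (k + 1) * (N - i) + s - 1 = x :=
    ⟨((k + 1) * (N - i) + s - 1).toNat, by
      have := mul_nonneg (by omega : 0 ≤ k + 1) (by omega : (0 : ℤ) ≤ N - i); omega⟩
  rw [eval_ballotPoly, hx, descPochhammer_eval_eq_descFactorial,
    Nat.descFactorial_eq_zero_iff_lt.mpr (by omega), Nat.cast_zero]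

theorem ballotNumber_mul_IC_eq_eval_ballotPoly {E : ℤ} {i : ℕ} (hiN : i ≤ N) (hN : 0 < N)
    (hiE : i ≤ E) (h : (k + 1) * (N - i) + s = N - i + E) :
    ballotNumber k s (N - i) * IC E i =
      s / N ! * (N.choose i * (ballotPoly k s N).eval (i : ℤ) : ℤ) := by
  obtain ⟨E, rfl⟩ : ∃ E' : ℕ, E = E' := ⟨E.toNat, by omega⟩
  have hM : (k + 1) * ((N - i : ℕ) : ℤ) + s = ((N - i + E : ℕ) : ℤ) := by
    push_cast [hiN]
    exact h
  rw [show (N : ℤ) - i = ((N - i : ℕ) : ℤ) by push_cast [hiN]; rfl,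
    ballotNumber_mul_IC (by omega) (by omega) hM, Nat.sub_add_cancel hiN, eval_ballotPoly,
    show (k + 1) * (N - i) + s - 1 = ((N - i + E - 1 : ℕ) : ℤ) by
      push_cast [hiN] at hM ⊢; omega,
    descPochhammer_eval_eq_descFactorial]
  push_cast
  ring

end ballotPoly

theorem mem_range_toNat_ediv_add_one_iff {x d : ℤ} {i : ℕ} (hx : 0 ≤ x) (hd : 0 < d) :
    i ∈ range ((x / d).toNat + 1) ↔ d * i ≤ x := by
  rw [mem_range, Nat.lt_add_one_iff, Int.le_toNat (Int.ediv_nonneg hx hd.le),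
    Int.le_ediv_iff_mul_le hd, mul_comm]

def pathSum (k r a b m n : ℤ) : ℚ :=
  ∑ i ∈ range (((b + r - 1 - k * a) / (k + 1)).toNat + 1),
    (-1) ^ i * ballotNumber k (n + r - k * m) (m - a - i) * IC (b + r - 1 - k * (a + i)) i

section pathSum

variable {k r a b : ℤ}

theorem pathSum_eq_zero_of_on_line {m n : ℤ} (h : n + r - k * m = 0) : pathSum k r a b m n = 0 :=
  sum_eq_zero fun i _ => by rw [h, ballotNumber_zero_left, mul_zero, zero_mul]

theorem pathSum_sub_one_left (n : ℤ) : pathSum k r a b (a - 1) n = 0 :=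
  sum_eq_zero fun i _ => by
    rw [ballotNumber_of_neg (by omega), mul_zero, zero_mul]

theorem pathSum_self (hab : k * a - r < b) : pathSum k r a b a b = 1 := by
  rw [pathSum, sum_eq_single 0]
  · simp [ballotNumber_zero_right (show b + r - k * a ≠ 0 by omega), IC]
  · intro i _ hi
    rw [ballotNumber_of_neg (by omega), mul_zero, zero_mul]
  · simp

theorem pathSum_eq_add (hk : 0 ≤ k) (hab : k * a - r < b) {m n : ℤ} (hn : b ≤ n)
    (hline : k * m - r < n) (hne : (m, n) ≠ (a, b)) :
    pathSum k r a b m n = pathSum k r a b (m - 1) n + pathSum k r a b m (n - 1) := by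
  rw [pathSum, pathSum, pathSum, ← sum_add_distrib]
  refine sum_congr rfl fun i hi => ?_
  have hi := (mem_range_toNat_ediv_add_one_iff (by omega) (by omega)).mp hi
  have hcs : m - a - i ≠ 0 ∨ n + r - k * m ≠ 1 := by
    by_contra! h
    have hmi : k * m = k * a + k * i := by rw [show m = a + i by omega]; ring
    have hi0 : (i : ℤ) = 0 := by nlinarith
    exact hne (Prod.ext (by simp; omega) (by simp; nlinarith))
  rw [ballotNumber_eq_add hk (by omega) hcs, show n + r - k * (m - 1) = n + r - k * m + k by ring,
    show m - 1 - a - i = m - a - i - 1 by ring, show n - 1 + r - k * m = n + r - k * m - 1 by ring]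
  ring

theorem pathSum_sub_one_bottom (hk : 0 ≤ k) {m : ℤ} (ham : a < m) (hline : k * m - r < b - 1) :
    pathSum k r a b m (b - 1) = 0 := by
  obtain ⟨s, hs⟩ : ∃ s, b - 1 + r - k * m = s := ⟨_, rfl⟩
  obtain ⟨N, hN⟩ : ∃ N : ℕ, m - a = N := ⟨(m - a).toNat, by omega⟩
  have hkN : k * N = k * m - k * a := by rw [← hN]; ring
  have hrange (i : ℕ) := mem_range_toNat_ediv_add_one_iff (x := b + r - 1 - k * a) (d := k + 1)
    (i := i) (by nlinarith) (by omega)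
  rw [pathSum, hs]
  calc _
      = ∑ i ∈ range (N + 1),
          (s / N ! : ℚ) *
            ((-1) ^ i * (N.choose i : ℤ) * (ballotPoly k s N).eval (i : ℤ) : ℤ) := by
        refine sum_congr_of_eq_on_inter ?_ ?_ ?_
        · intro i _ hiN
          rw [ballotNumber_of_neg (by simp at hiN; omega), mul_zero, zero_mul]
        · intro i hiN hiT
          rw [hrange, not_le] at hiT
          rw [mem_range, Nat.lt_add_one_iff] at hiN
          rw [eval_ballotPoly_eq_zero hk (by omega) hiN (by linarith)]
          simp
        · intro i hiT hiN
          rw [hrange] at hiT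
          rw [mem_range, Nat.lt_add_one_iff] at hiN
          rw [show m - a - i = N - i by omega, mul_assoc,
            ballotNumber_mul_IC_eq_eval_ballotPoly hiN (by omega) (by linarith) (by linarith)]
          push_cast
          ring
    _ = 0 := by
      rw [← mul_sum, ← Int.cast_sum,
        Polynomial.sum_range_neg_one_pow_mul_choose_mul_eval_eq_zero _
          (natDegree_ballotPoly_lt (by omega)),
        Int.cast_zero, mul_zero]

end pathSum

theorem NS_eq_ncard_strictPaths (k r a b m n : ℤ) :
    NS k r a b m n = (strictPaths k r (a, b) (m, n)).ncard := rfl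

theorem NS_eq_pathSum {k r a b : ℤ} (hk : 0 ≤ k) (hab : k * a - r < b) (m n : ℤ)
    (hm : a ≤ m) (hn : b ≤ n) (hline : k * m - r < n) :
    (NS k r a b m n : ℚ) = pathSum k r a b m n := by
  simp only [NS_eq_ncard_strictPaths]
  by_cases hne : (m, n) = (a, b)
  · obtain ⟨rfl, rfl⟩ := Prod.ext_iff.mp hne
    rw [strictPaths_self hab, Set.ncard_singleton, pathSum_self hab, Nat.cast_one]
  rw [ncard_strictPaths_eq_add (Ne.symm hne) hline, Nat.cast_add,
    pathSum_eq_add hk hab hn hline hne]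
  congr 1
  · rcases hm.eq_or_lt with rfl | hm
    · rw [strictPaths_eq_empty_of_not_le (by simp [Prod.le_def]), pathSum_sub_one_left]
      simp
    · simpa only [NS_eq_ncard_strictPaths] using
        NS_eq_pathSum hk hab (m - 1) n (by omega) hn (by linarith)
  · rcases le_or_gt (n - 1) (k * m - r) with hbelow | habove
    · rw [strictPaths_eq_empty_of_le_line hbelow, pathSum_eq_zero_of_on_line (by omega)]
      simp
    rcases hn.eq_or_lt with rfl | hn
    · have ham : a < m := hm.lt_of_ne (by rintro rfl; exact hne rfl)
      rw [strictPaths_eq_empty_of_not_le (by simp [Prod.le_def]),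
        pathSum_sub_one_bottom hk ham habove]
      simp
    · simpa only [NS_eq_ncard_strictPaths] using
        NS_eq_pathSum hk hab m (n - 1) hm (by omega) habove
termination_by ((m - a) + (n - b)).toNat

theorem stmt9_general (k r a b m n : ℤ) (hk : 1 ≤ k) (ham : a ≤ m)
    (hb2 : k * a - r < b) (hbn : b ≤ n) (hn : k * m - r < n) :
    (NS k r a b m n : ℚ) =
      ∑ i ∈ Finset.range (((b + r - 1 - k * a) / (k + 1)).toNat + 1),
        (-1 : ℚ) ^ i *
          (((n + r - k * m : ℤ) : ℚ) / ((m + n + r - (k + 1) * (a + (i : ℤ)) : ℤ) : ℚ)) *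
          (IC (m + n + r - (k + 1) * (a + (i : ℤ))) (m - a - (i : ℤ)) : ℚ) *
          (IC (b + r - 1 - k * (a + (i : ℤ))) (i : ℤ) : ℚ) := by
  rw [NS_eq_pathSum (by omega) hb2 m n ham hbn hn, pathSum]
  refine sum_congr rfl fun i _ => ?_
  rw [ballotNumber, show (k + 1) * (m - a - i) + (n + r - k * m) = m + n + r - (k + 1) * (a + i) by
    ring]
  ring

theorem stmt9 (k r a b m n : ℤ) (hk : 1 ≤ k) (ha : 0 ≤ a) (ham : a ≤ m)
    (hb1 : 0 < b) (hb2 : k * a - r < b) (hbn : b ≤ n) (hn : k * m - r < n) :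
    (NS k r a b m n : ℚ) =
      ∑ i ∈ Finset.range (((b + r - 1 - k * a) / (k + 1)).toNat + 1),
        (-1 : ℚ) ^ i *
          (((n + r - k * m : ℤ) : ℚ) / ((m + n + r - (k + 1) * (a + (i : ℤ)) : ℤ) : ℚ)) *
          (IC (m + n + r - (k + 1) * (a + (i : ℤ))) (m - a - (i : ℤ)) : ℚ) *
          (IC (b + r - 1 - k * (a + (i : ℤ))) (i : ℤ) : ℚ) :=
  stmt9_general k r a b m n hk ham hb2 hbn hn
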